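/- arXiv:2510.21499 — 3 statements merged into one kernel-verified Lean document; each statement's English description precedes it below -/
import Mathlib

section
/- Let A, B, C be subspaces of E, let 𝒪 be an E-orbit in X²_{AB} and set o = p₁𝒪. Then the collection of subsets 𝒪 • 𝒪' of X²_{AC}, as 𝒪' ranges over the E-orbits in X²_{BC} with p₂𝒪 = p₁𝒪', is exactly the collection of all E × B-orbits 𝓜 on X²_{AC} (action (e,b)·(x,y) = (e+b+x, e+y)) satisfying p₁𝓜 = o. -/
open scoped Classical

set_option linter.unusedSectionVars false

noncomputable section

namespace Lusztig

variable (E X : Type) [AddCommGroup E] [Module (ZMod 2) E] [Fintype E]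
  [Fintype X] [AddAction E X]

/-- The stabilizer of `x` in `E`, as a subset of `E`. -/
def stabSet (x : X) : Set E := {e : E | e +ᵥ x = x}

/-- `X_A`: the set of points of `X` whose stabilizer in `E` equals `A`. -/
def XA (A : Submodule (ZMod 2) E) : Set X := {x : X | stabSet E X x = (A : Set E)}

/-- `X²_{AB} = X_A × X_B`. -/
def X2 (A B : Submodule (ZMod 2) E) : Set (X × X) := (XA E X A) ×ˢ (XA E X B)

/-- The `E`-orbit of `x` in `X`. -/
def orb (x : X) : Set X := {y : X | ∃ e : E, y = e +ᵥ x}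

/-- The `E`-orbit of `(x,y)` for the diagonal action of `E` on `X × X`. -/
def orb2 (x y : X) : Set (X × X) := {q : X × X | ∃ e : E, q = (e +ᵥ x, e +ᵥ y)}

/-- `O` is an `E`-orbit (for the diagonal action) contained in `X²_{AB}`. -/
def IsOrb2 (A B : Submodule (ZMod 2) E) (O : Set (X × X)) : Prop :=
  ∃ x y : X, x ∈ XA E X A ∧ y ∈ XA E X B ∧ O = orb2 E X x y

/-- The `E × B`-orbit of `(x,y)` for the action `(e,b)·(x,y) = (e+b+x, e+y)`. -/
def orbEB (B : Submodule (ZMod 2) E) (x y : X) : Set (X × X) :=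
  {q : X × X | ∃ e b : E, b ∈ B ∧ q = ((e + b) +ᵥ x, e +ᵥ y)}

/-- `M` is an `E × B`-orbit contained in `X²_{AC}` for the action
`(e,b)·(x,y) = (e+b+x, e+y)`. -/
def IsOrbEB (A B C : Submodule (ZMod 2) E) (M : Set (X × X)) : Prop :=
  ∃ x y : X, x ∈ XA E X A ∧ y ∈ XA E X C ∧ M = orbEB E X B x y

/-- Image under the first projection. -/
def p1 (S : Set (X × X)) : Set X := Prod.fst '' S

/-- Image under the second projection. -/
def p2 (S : Set (X × X)) : Set X := Prod.snd '' S

/-- `U_{ABC} = {(a,b,c) ∈ A × B × C : a + b + c = 0}`. -/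
def UABC (A B C : Submodule (ZMod 2) E) : Set (E × E × E) :=
  {t : E × E × E | t.1 ∈ A ∧ t.2.1 ∈ B ∧ t.2.2 ∈ C ∧ t.1 + t.2.1 + t.2.2 = 0}

/-- `X̄_C`: the set of `E`-orbits contained in `X_C`. -/
def barX (C : Submodule (ZMod 2) E) : Set (Set X) :=
  {s : Set X | ∃ x ∈ XA E X C, s = orb E X x}

/-- The dual (space of linear forms `P → ℤ/2`) of a subspace `P` of `E`. -/
abbrev Dl (P : Submodule (ZMod 2) E) : Type := ↥P →ₗ[ZMod 2] ZMod 2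

/-- Restriction of a linear form along an inclusion of subspaces. -/
def res {P Q : Submodule (ZMod 2) E} (h : P ≤ Q) (φ : Dl E Q) : Dl E P :=
  φ.comp (Submodule.inclusion h)

theorem leAB (A B C : Submodule (ZMod 2) E) : A ⊓ B ⊓ C ≤ A ⊓ B := inf_le_left
theorem leBC (A B C : Submodule (ZMod 2) E) : A ⊓ B ⊓ C ≤ B ⊓ C :=
  le_inf (inf_le_left.trans inf_le_right) inf_le_right
theorem leAC (A B C : Submodule (ZMod 2) E) : A ⊓ B ⊓ C ≤ A ⊓ C :=
  le_inf (inf_le_left.trans inf_le_left) inf_le_right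
theorem leBA (A B : Submodule (ZMod 2) E) : A ⊓ B ≤ B ⊓ A := le_inf inf_le_right inf_le_left

/-- The convolution product `𝓕_{AB} × 𝓕_{BC} → 𝓕_{AC}`. -/
def conv (A B C : Submodule (ZMod 2) E)
    (f₁ : (X × X) × Dl E (A ⊓ B) → ℂ) (f₂ : (X × X) × Dl E (B ⊓ C) → ℂ) :
    (X × X) × Dl E (A ⊓ C) → ℂ :=
  fun p =>
    (∑ᶠ (y : X) (_ : y ∈ XA E X B) (ε₁ : Dl E (A ⊓ B)) (ε₂ : Dl E (B ⊓ C))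
        (_ : res E (leAB E A B C) ε₁ + res E (leBC E A B C) ε₂
              + res E (leAC E A B C) p.2 = 0),
        f₁ ((p.1.1, y), ε₁) * f₂ ((y, p.1.2), ε₂)) *
      (Nat.card ↥(A ⊓ B ⊓ C) : ℂ) / (Nat.card ↥(A ⊓ C) : ℂ)

/-- The defining conditions for membership in `𝓕_{AB}`: supported on `X²_{AB}` and
invariant under the diagonal `E`-action. -/
def MemF (A B : Submodule (ZMod 2) E) (f : (X × X) × Dl E (A ⊓ B) → ℂ) : Prop :=
  (∀ p : (X × X) × Dl E (A ⊓ B), p.1 ∉ X2 E X A B → f p = 0) ∧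
  (∀ (e : E) (x y : X) (ε : Dl E (A ⊓ B)), f ((e +ᵥ x, e +ᵥ y), ε) = f ((x, y), ε))

/-- `𝓕_{AB}` as a subspace of the space of all functions. -/
def FAB (A B : Submodule (ZMod 2) E) : Submodule ℂ ((X × X) × Dl E (A ⊓ B) → ℂ) where
  carrier := {f | MemF E X A B f}
  add_mem' := by
    intro a b ha hb
    exact ⟨fun p hp => by simp [ha.1 p hp, hb.1 p hp],
      fun e x y ε => by simp [Pi.add_apply, ha.2 e x y ε, hb.2 e x y ε]⟩
  zero_mem' := ⟨fun p hp => rfl, fun e x y ε => rfl⟩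
  smul_mem' := by
    intro c a ha
    exact ⟨fun p hp => by simp [Pi.smul_apply, ha.1 p hp],
      fun e x y ε => by simp [Pi.smul_apply, ha.2 e x y ε]⟩

/-- `[Ξ]^ε`. -/
def br (A B : Submodule (ZMod 2) E) (Ξ : Set (X × X)) (ε : Dl E (A ⊓ B)) :
    (X × X) × Dl E (A ⊓ B) → ℂ :=
  fun p => if p.1 ∈ Ξ ∧ p.2 = ε then 1 else 0

/-- The ambient space of `𝓕 = ⊕_{A,B} 𝓕_{AB}` (all summands at once). -/
abbrev FF : Type := ∀ A B : Submodule (ZMod 2) E, (X × X) × Dl E (A ⊓ B) → ℂ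

/-- The embedding of the `(A,B)` summand into `𝓕`. -/
def emb (A B : Submodule (ZMod 2) E) (f : (X × X) × Dl E (A ⊓ B) → ℂ) : FF E X :=
  fun A' B' p =>
    if h : A = A' ∧ B = B' then f (p.1, cast (by rw [h.1, h.2]) p.2) else 0

/-- `𝓕` as a subspace of `FF`: componentwise supported on `X²_{AB}` and `E`-invariant. -/
def FFsub : Submodule ℂ (FF E X) where
  carrier := {g | ∀ A B, MemF E X A B (g A B)}
  add_mem' := by
    intro a b ha hb A B
    exact ⟨fun p hp => by simp [(ha A B).1 p hp, (hb A B).1 p hp],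
      fun e x y ε => by simp [(ha A B).2 e x y ε, (hb A B).2 e x y ε]⟩
  zero_mem' := fun A B => ⟨fun p hp => rfl, fun e x y ε => rfl⟩
  smul_mem' := by
    intro c a ha A B
    exact ⟨fun p hp => by simp [(ha A B).1 p hp],
      fun e x y ε => by simp [(ha A B).2 e x y ε]⟩

/-- The product on `𝓕` (zero between summands `𝓕_{AB}`, `𝓕_{B'C}` with `B ≠ B'`). -/
def mulFF (g h : FF E X) : FF E X :=
  fun A C => ∑ᶠ B : Submodule (ZMod 2) E, conv E X A B C (g A B) (h B C)

/-- The diagonal `Δ_A ⊆ X²_{AA}`. -/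
def diagSet (A : Submodule (ZMod 2) E) : Set (X × X) :=
  {q : X × X | q.1 ∈ XA E X A ∧ q.2 = q.1}

/-- The element `∑_A [Δ_A]^0` of `𝓕`. -/
def unitFF : FF E X :=
  ∑ᶠ A : Submodule (ZMod 2) E, emb E X A A (br E X A A (diagSet E X A) 0)

/-- The map `f ↦ f^#` on `𝓕`. -/
def shFF (g : FF E X) : FF E X :=
  fun A B p => g B A ((p.1.2, p.1.1), res E (leBA E B A) p.2)

/-- `𝒪 • 𝒪'`. -/
def bullet (O O' : Set (X × X)) : Set (X × X) :=
  {q : X × X | ∃ y : X, (q.1, y) ∈ O ∧ (y, q.2) ∈ O'}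

/-- `∑_{ε ∈ α̃} [𝓜]^ε ∈ 𝓕_{AC}`, where `α̃` is the fibre of
`(A∩C)* → (A∩B∩C)*` over `α`. -/
def bSum (A B C : Submodule (ZMod 2) E) (M : Set (X × X)) (α : Dl E (A ⊓ B ⊓ C)) :
    (X × X) × Dl E (A ⊓ C) → ℂ :=
  ∑ᶠ (ε : Dl E (A ⊓ C)) (_ : res E (leAC E A B C) ε = α), br E X A C M ε

/-- The set `𝓑_{oBC} ⊆ 𝓕` (embedded in `FF`). -/
def BoBC (A B C : Submodule (ZMod 2) E) (o : Set X) : Set (FF E X) :=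
  {g | ∃ (M : Set (X × X)) (α : Dl E (A ⊓ B ⊓ C)),
      IsOrbEB E X A B C M ∧ p1 X M = o ∧ g = emb E X A C (bSum E X A B C M α)}

/-- The set `𝓑_{oB} = ⊔_C 𝓑_{oBC}`. -/
def BoB (A B : Submodule (ZMod 2) E) (o : Set X) : Set (FF E X) :=
  ⋃ C : Submodule (ZMod 2) E, BoBC E X A B C o

/-- `[[oB]]`, the `ℂ`-span of `𝓑_{oB}`. -/
def ooB (A B : Submodule (ZMod 2) E) (o : Set X) : Submodule ℂ (FF E X) :=
  Submodule.span ℂ (BoB E X A B o)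

lemma XA_vadd {A : Submodule (ZMod 2) E} {x : X} (hx : x ∈ XA E X A) (e : E) :
    e +ᵥ x ∈ XA E X A := by
  have : stabSet E X (e +ᵥ x) = stabSet E X x := by
    ext f
    simp only [stabSet, Set.mem_setOf_eq]
    constructor
    · intro h
      have : e +ᵥ (f +ᵥ x) = e +ᵥ x := by
        rw [vadd_vadd, add_comm, ← vadd_vadd]; exact h
      exact vadd_left_cancel e this
    · intro h
      rw [vadd_vadd, add_comm, ← vadd_vadd, h]
  simpa [XA, this] using hx

lemma mem_orb_self (x : X) : x ∈ orb E X x := ⟨0, (zero_vadd E x).symm⟩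

lemma orb_vadd (e : E) (x : X) : orb E X (e +ᵥ x) = orb E X x := by
  ext z
  constructor
  · rintro ⟨f, rfl⟩; exact ⟨f + e, by rw [vadd_vadd]⟩
  · rintro ⟨f, rfl⟩; exact ⟨f - e, by rw [vadd_vadd, sub_add_cancel]⟩

lemma orb_eq_iff {x x' : X} (h : orb E X x = orb E X x') : ∃ e : E, x' = e +ᵥ x := by
  have : x' ∈ orb E X x := h ▸ mem_orb_self E X x'
  exact this

lemma p1_orb2 (x y : X) : p1 X (orb2 E X x y) = orb E X x := by
  ext u
  constructor
  · rintro ⟨⟨u1, u2⟩, ⟨e, he⟩, rfl⟩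
    exact ⟨e, congrArg Prod.fst he⟩
  · rintro ⟨e, rfl⟩
    exact ⟨(e +ᵥ x, e +ᵥ y), ⟨e, rfl⟩, rfl⟩

lemma p2_orb2 (x y : X) : p2 X (orb2 E X x y) = orb E X y := by
  ext u
  constructor
  · rintro ⟨⟨u1, u2⟩, ⟨e, he⟩, rfl⟩
    exact ⟨e, congrArg Prod.snd he⟩
  · rintro ⟨e, rfl⟩
    exact ⟨(e +ᵥ x, e +ᵥ y), ⟨e, rfl⟩, rfl⟩

lemma p1_orbEB (B : Submodule (ZMod 2) E) (x y : X) :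
    p1 X (orbEB E X B x y) = orb E X x := by
  ext u
  constructor
  · rintro ⟨⟨u1, u2⟩, ⟨e, b, hb, he⟩, rfl⟩
    exact ⟨e + b, congrArg Prod.fst he⟩
  · rintro ⟨e, rfl⟩
    exact ⟨((e + 0) +ᵥ x, e +ᵥ y), ⟨e, 0, B.zero_mem, rfl⟩, by simp⟩

lemma orb2_shift (g : E) (x y : X) :
    orb2 E X (g +ᵥ x) y = orb2 E X x ((-g) +ᵥ y) := by
  ext q
  constructor
  · rintro ⟨e, rfl⟩
    refine ⟨e + g, ?_⟩
    simp only [vadd_vadd]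
    rw [show e + g + -g = e by abel]
  · rintro ⟨e, rfl⟩
    refine ⟨e - g, ?_⟩
    simp only [vadd_vadd]
    rw [show e - g + g = e by abel, show e + -g = e - g by abel]

lemma orbEB_shift (B : Submodule (ZMod 2) E) (g : E) (x y : X) :
    orbEB E X B (g +ᵥ x) y = orbEB E X B x ((-g) +ᵥ y) := by
  ext q
  constructor
  · rintro ⟨e, b, hb, rfl⟩
    refine ⟨e + g, b, hb, ?_⟩
    simp only [vadd_vadd]
    rw [show e + b + g = e + g + b by abel, show e + g + -g = e by abel]
  · rintro ⟨e, b, hb, rfl⟩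
    refine ⟨e - g, b, hb, ?_⟩
    simp only [vadd_vadd]
    rw [show e - g + b + g = e + b by abel, show e + -g = e - g by abel]

lemma bullet_orb2 (B : Submodule (ZMod 2) E) (x y z : X)
    (hy : stabSet E X y = (B : Set E)) :
    bullet X (orb2 E X x y) (orb2 E X y z) = orbEB E X B x z := by
  ext q
  constructor
  · rintro ⟨t, ⟨e, he⟩, ⟨e', he'⟩⟩
    have h1 : q.1 = e +ᵥ x := congrArg Prod.fst he
    have ht : t = e +ᵥ y := congrArg Prod.snd he
    have ht' : t = e' +ᵥ y := congrArg Prod.fst he'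
    have h2 : q.2 = e' +ᵥ z := congrArg Prod.snd he'
    have hstab : (e - e') +ᵥ y = y := by
      have : e +ᵥ y = e' +ᵥ y := ht ▸ ht'
      rw [show e - e' = -e' + e by abel, ← vadd_vadd, this, vadd_vadd,
        show -e' + e' = 0 by abel, zero_vadd]
    have hb : e - e' ∈ B := by
      have : e - e' ∈ stabSet E X y := hstab
      rwa [hy] at this
    refine ⟨e', e - e', hb, ?_⟩
    rw [Prod.ext_iff]
    constructor
    · rw [h1]; congr 1; abel
    · exact h2
  · rintro ⟨e, b, hb, rfl⟩
    have hby : b +ᵥ y = y := by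
      have : b ∈ stabSet E X y := by rw [hy]; exact hb
      exact this
    refine ⟨e +ᵥ y, ⟨e + b, ?_⟩, ⟨e, rfl⟩⟩
    rw [show (e + b) +ᵥ y = e +ᵥ y by rw [← vadd_vadd, hby]]

/-- the sets `𝒪 • 𝒪'` (for `𝒪'` ranging over the `E`-orbits in `X²_{BC}`
composable with `𝒪`) are exactly the `E × B`-orbits `𝓜` on `X²_{AC}` with `p₁𝓜 = o`. -/
theorem statement11 (A B C : Submodule (ZMod 2) E) (O : Set (X × X))
    (hO : IsOrb2 E X A B O) (o : Set X) (ho : o = p1 X O) :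
    {M : Set (X × X) | ∃ O' : Set (X × X),
        IsOrb2 E X B C O' ∧ p2 X O = p1 X O' ∧ M = bullet X O O'} =
      {M : Set (X × X) | IsOrbEB E X A B C M ∧ p1 X M = o} := by
  obtain ⟨x, y, hx, hy, rfl⟩ := hO
  have hyB : stabSet E X y = (B : Set E) := hy
  rw [p1_orb2] at ho
  ext M
  simp only [Set.mem_setOf_eq]
  constructor
  · rintro ⟨O', ⟨y', z, hy', hz, rfl⟩, hcomp, rfl⟩
    rw [p2_orb2, p1_orb2] at hcomp
    obtain ⟨f, rfl⟩ := orb_eq_iff E X hcomp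
    rw [orb2_shift, bullet_orb2 E X B x y ((-f) +ᵥ z) hyB]
    refine ⟨⟨x, (-f) +ᵥ z, hx, XA_vadd E X hz (-f), rfl⟩, ?_⟩
    rw [p1_orbEB, ho]
  · rintro ⟨⟨x₀, z, hx₀, hz, rfl⟩, hp1⟩
    rw [p1_orbEB, ho] at hp1
    obtain ⟨g, rfl⟩ := orb_eq_iff E X hp1.symm
    rw [orbEB_shift]
    refine ⟨orb2 E X y ((-g) +ᵥ z), ⟨y, (-g) +ᵥ z, hy, XA_vadd E X hz (-g), rfl⟩, ?_, ?_⟩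
    · rw [p2_orb2, p1_orb2]
    · rw [bullet_orb2 E X B x y ((-g) +ᵥ z) hyB]

end Lusztig
end
end

section
/- Let A, B be subspaces of E and o an E-orbit contained in X_A. Then the set 𝓑_{oB} = ⊔_C 𝓑_{oBC} is ℂ-linearly independent in 𝓕. -/
open scoped Classical

set_option linter.unusedSectionVars false

noncomputable section

namespace Lusztig

variable (E X : Type) [AddCommGroup E] [Module (ZMod 2) E] [Fintype E]
  [Fintype X] [AddAction E X]

/-! ### Auxiliary lemmas -/

lemma add_self_zmod2 (e : E) : e + e = 0 := by
  have h : (2 : ZMod 2) • e = e + e := two_smul _ _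
  rw [show (2 : ZMod 2) = 0 by decide, zero_smul] at h
  exact h.symm

lemma vadd_cancel (e : E) (w : X) : e +ᵥ (e +ᵥ w) = w := by
  rw [← add_vadd, add_self_zmod2, zero_vadd]

lemma mem_orbEB_self (B : Submodule (ZMod 2) E) (x y : X) :
    (x, y) ∈ orbEB E X B x y :=
  ⟨0, 0, B.zero_mem, by simp⟩

lemma orbEB_symm (B : Submodule (ZMod 2) E) (x y : X) {q : X × X}
    (hq : q ∈ orbEB E X B x y) : (x, y) ∈ orbEB E X B q.1 q.2 := by
  obtain ⟨e, b, hb, rfl⟩ := hq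
  exact ⟨e, b, hb, by simp [vadd_cancel]⟩

lemma orbEB_trans (B : Submodule (ZMod 2) E) (x y x' y' : X) {z : X × X}
    (hz : z ∈ orbEB E X B x' y') (h' : (x', y') ∈ orbEB E X B x y) :
    z ∈ orbEB E X B x y := by
  obtain ⟨e₁, b₁, hb₁, rfl⟩ := hz
  obtain ⟨e, b, hb, heq⟩ := h'
  simp only [Prod.mk.injEq] at heq
  obtain ⟨hx, hy⟩ := heq
  have h1 : (e₁ + b₁) +ᵥ x' = ((e₁ + e) + (b₁ + b)) +ᵥ x := by
    rw [hx, ← add_vadd]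
    congr 1
    abel
  have h2 : e₁ +ᵥ y' = (e₁ + e) +ᵥ y := by rw [hy, ← add_vadd]
  exact ⟨e₁ + e, b₁ + b, B.add_mem hb₁ hb, by rw [h1, h2]⟩

lemma orbEB_eq_of_mem (B : Submodule (ZMod 2) E) (x y : X) {q : X × X}
    (hq : q ∈ orbEB E X B x y) : orbEB E X B x y = orbEB E X B q.1 q.2 := by
  ext z
  constructor
  · intro hz
    exact orbEB_trans E X B q.1 q.2 x y hz (orbEB_symm E X B x y hq)
  · intro hz
    exact orbEB_trans E X B x y q.1 q.2 hz (by simpa using hq)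

instance dlFinite (P : Submodule (ZMod 2) E) : Finite (Dl E P) :=
  Finite.of_injective (fun f => (f : ↥P → ZMod 2)) DFunLike.coe_injective

lemma exists_res_eq {P Q : Submodule (ZMod 2) E} (h : P ≤ Q) (α : Dl E P) :
    ∃ ε : Dl E Q, res E h ε = α := by
  obtain ⟨g, hg⟩ := (Submodule.inclusion h).exists_leftInverse_of_injective
    (LinearMap.ker_eq_bot.mpr (Submodule.inclusion_injective h))
  refine ⟨α.comp g, ?_⟩
  unfold res
  rw [LinearMap.comp_assoc, hg, LinearMap.comp_id]

lemma emb_apply (A C : Submodule (ZMod 2) E) (f : (X × X) × Dl E (A ⊓ C) → ℂ)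
    (p : (X × X) × Dl E (A ⊓ C)) : emb E X A C f A C p = f p := by
  unfold emb
  rw [dif_pos ⟨rfl, rfl⟩, cast_eq]

lemma emb_apply_ne (A C A' C' : Submodule (ZMod 2) E) (h : ¬(A = A' ∧ C = C'))
    (f : (X × X) × Dl E (A ⊓ C) → ℂ) :
    ∀ q, emb E X A C f A' C' q = 0 := fun _ => dif_neg h

lemma bSum_apply (A B C : Submodule (ZMod 2) E) (M : Set (X × X))
    (α : Dl E (A ⊓ B ⊓ C)) (p : (X × X) × Dl E (A ⊓ C)) :
    bSum E X A B C M α p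
      = if p.1 ∈ M ∧ res E (leAC E A B C) p.2 = α then 1 else 0 := by
  classical
  haveI : Fintype (Dl E (A ⊓ C)) := Fintype.ofFinite _
  unfold bSum
  rw [finsum_eq_sum_of_fintype, Finset.sum_apply]
  rw [Finset.sum_eq_single p.2]
  · rw [finsum_eq_if]
    by_cases hα : res E (leAC E A B C) p.2 = α
    · rw [if_pos hα]
      simp [br, hα]
    · rw [if_neg hα]
      simp [hα]
  · intro ε _ hε
    rw [finsum_eq_if]
    by_cases hα : res E (leAC E A B C) ε = α
    · rw [if_pos hα]
      simp only [br]
      rw [if_neg]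
      rintro ⟨-, h2⟩
      exact hε h2.symm
    · rw [if_neg hα]
      rfl
  · intro h
    exact absurd (Finset.mem_univ _) h

/-- the set `𝓑_{oB}` is `ℂ`-linearly independent in `𝓕`. -/
theorem statement12 (A B : Submodule (ZMod 2) E) (o : Set X)
    (ho : ∃ x ∈ XA E X A, o = orb E X x) :
    LinearIndependent ℂ ((↑) : (BoB E X A B o) → FF E X) := by
  rw [linearIndependent_iff']
  intro s c hsum i hi
  obtain ⟨C, M, α, hM, hp1, hgeq⟩ := Set.mem_iUnion.mp i.2
  obtain ⟨x, y, hx, hy, rfl⟩ := hM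
  obtain ⟨ε, hε⟩ := exists_res_eq E (leAC E A B C) α
  set p : (X × X) × Dl E (A ⊓ C) := ((x, y), ε) with hp
  have hival : (i : FF E X) A C p = 1 := by
    rw [hgeq, emb_apply, bSum_apply]
    simp [hp, mem_orbEB_self, hε]
  have hzero : ∀ j ∈ s, j ≠ i → (j : FF E X) A C p = 0 := by
    intro j _ hne
    obtain ⟨C', M', α', hM', hp1', hgeq'⟩ := Set.mem_iUnion.mp j.2
    obtain ⟨x', y', hx', hy', rfl⟩ := hM'
    by_cases hCC : C' = C
    · subst hCC
      rw [hgeq', emb_apply, bSum_apply]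
      rw [if_neg]
      rintro ⟨hmem, hres⟩
      apply hne
      apply Subtype.ext
      have hα : α' = α := by
        rw [← hres]
        exact hε
      have hMM : orbEB E X B x' y' = orbEB E X B x y := by
        have := orbEB_eq_of_mem E X B x' y' (q := (x, y)) hmem
        simpa using this
      rw [hgeq', hgeq, hMM, hα]
    · rw [hgeq']
      exact emb_apply_ne E X A C' A C (by tauto) _ p
  have h0 := congrFun (congrFun (congrFun hsum A) C) p
  simp only [Finset.sum_apply, Pi.smul_apply, smul_eq_mul, Pi.zero_apply] at h0
  rw [Finset.sum_eq_single_of_mem i hi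
    (fun j hj hne => by rw [hzero j hj hne, mul_zero])] at h0
  rw [hival, mul_one] at h0
  exact h0

end Lusztig
end
end

section
/- Let A, B, C be subspaces of E with A ⊕ B = E (i.e. A ∩ B = 0 and A + B = E), let o be an E-orbit contained in X_A and o' an E-orbit contained in X_C. Then o × o' is a single orbit for the action of E × B on X²_{AC} given by (e,b)·(x,y) = (e+b+x, e+y); consequently the E × B-orbits 𝓜 on X²_{AC} with p₁𝓜 = o are exactly the sets o × o' with o' an E-orbit in X_C. -/
open scoped Classical

set_option linter.unusedSectionVars false

noncomputable section

namespace Lusztig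

variable (E X : Type) [AddCommGroup E] [Module (ZMod 2) E] [Fintype E]
  [Fintype X] [AddAction E X]

lemma orbEB_eq_prod (A B : Submodule (ZMod 2) E) (hs : A ⊔ B = ⊤)
    (x y : X) (hx : x ∈ XA E X A) :
    orbEB E X B x y = orb E X x ×ˢ orb E X y := by
  ext q
  constructor
  · rintro ⟨e, b, hb, rfl⟩
    exact ⟨⟨e + b, rfl⟩, ⟨e, rfl⟩⟩
  · rintro ⟨⟨f, hf⟩, ⟨e, he⟩⟩
    have hmem : f - e ∈ A ⊔ B := by rw [hs]; trivial
    obtain ⟨a, ha, b, hb, hab⟩ := Submodule.mem_sup.mp hmem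
    refine ⟨e, b, hb, ?_⟩
    have hax : a +ᵥ x = x := by
      have : a ∈ stabSet E X x := by rw [hx]; exact ha
      exact this
    have : (e + b) +ᵥ x = f +ᵥ x := by
      have h1 : f = (e + b) + a := by
        have := hab
        linear_combination (norm := abel) -this
      conv_rhs => rw [h1, add_vadd, hax]
    have hq : q = (f +ᵥ x, e +ᵥ y) := by
      cases q; simp only [Prod.mk.injEq] at hf he ⊢; exact ⟨hf, he⟩
    rw [hq, this]

lemma p1_prod (o o' : Set X) (h : o'.Nonempty) : p1 X (o ×ˢ o') = o := by
  ext z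
  constructor
  · rintro ⟨⟨a, b⟩, ⟨ha, hb⟩, rfl⟩; exact ha
  · intro hz; obtain ⟨w, hw⟩ := h; exact ⟨(z, w), ⟨hz, hw⟩, rfl⟩

/-- if `A ⊕ B = E`, then for `E`-orbits `o ⊆ X_A`, `o' ⊆ X_C` the set
`o × o'` is a single `E × B`-orbit; consequently the `E × B`-orbits `𝓜` on `X²_{AC}`
with `p₁𝓜 = o` are exactly the sets `o × o''` with `o''` an `E`-orbit in `X_C`. -/
theorem statement16 (A B C : Submodule (ZMod 2) E)
    (hd : A ⊓ B = ⊥) (hs : A ⊔ B = ⊤)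
    (o o' : Set X) (ho : ∃ x ∈ XA E X A, o = orb E X x)
    (ho' : ∃ x ∈ XA E X C, o' = orb E X x) :
    IsOrbEB E X A B C (o ×ˢ o') ∧
    {M : Set (X × X) | IsOrbEB E X A B C M ∧ p1 X M = o} =
      {M : Set (X × X) | ∃ o'' ∈ barX E X C, M = o ×ˢ o''} := by
  obtain ⟨x, hx, rfl⟩ := ho
  obtain ⟨y, hy, rfl⟩ := ho'
  constructor
  · exact ⟨x, y, hx, hy, (orbEB_eq_prod E X A B hs x y hx).symm⟩
  · ext M
    simp only [Set.mem_setOf_eq]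
    constructor
    · rintro ⟨⟨x', y', hx', hy', rfl⟩, hp⟩
      refine ⟨orb E X y', ⟨y', hy', rfl⟩, ?_⟩
      rw [orbEB_eq_prod E X A B hs x' y' hx'] at hp ⊢
      rw [p1_prod X (orb E X x') (orb E X y') ⟨y', 0, (zero_vadd E y').symm⟩] at hp
      rw [hp]
    · rintro ⟨o'', ⟨y'', hy'', rfl⟩, rfl⟩
      refine ⟨⟨x, y'', hx, hy'', (orbEB_eq_prod E X A B hs x y'' hx).symm⟩, ?_⟩
      exact p1_prod X (orb E X x) (orb E X y'') ⟨y'', 0, (zero_vadd E y'').symm⟩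

end Lusztig
end
end
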